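/- arXiv:2402.01231 — 4 statements merged into one kernel-verified Lean document; each statement's English description precedes it below -/
import Mathlib

section
/- Let n ≥ 1 and let A = (a_ij) ∈ ℝ^{n×n}. Then the one-sided limit lim_{δ→0⁺} (‖I + δ·A‖_∞ − 1)/δ exists and equals max_i [a_ii + Σ_{j≠i} |a_ij|]. That is, the logarithmic norm of A induced by the ∞-operator norm is μ_∞(A) = max_i [a_ii + Σ_{j,j≠i} |a_ij|]. -/
/-! For small `δ > 0` the diagonal entries `1 + δ aᵢᵢ` of `I + δA` are nonnegative, so the `i`-th
absolute row sum of `I + δA` is exactly `1 + δ (aᵢᵢ + ∑_{j ≠ i} |aᵢⱼ|)`. Taking the maximum over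
`i` gives `‖I + δA‖_∞ = 1 + δ μ`, so the difference quotient is the constant `μ` near `0⁺`. -/

attribute [local instance] Matrix.linftyOpNormedAddCommGroup

open Filter Topology

namespace Matrix

theorem linfty_opNorm_eq_iSup {m n α : Type*} [Fintype m] [Fintype n] [NormedAddCommGroup α]
    (M : Matrix m n α) : ‖M‖ = ⨆ i, ∑ j, ‖M i j‖ := by
  simp [linfty_opNorm_def, Finset.sup_univ_eq_ciSup, NNReal.coe_iSup]

variable {ι : Type*} [Fintype ι] [DecidableEq ι]

theorem sum_norm_one_add_smul_row (A : Matrix ι ι ℝ) {δ : ℝ} (hδ : 0 ≤ δ)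
    (i : ι) (hdiag : 0 ≤ 1 + δ * A i i) :
    ∑ j, ‖(1 + δ • A) i j‖ = 1 + δ * (A i i + ∑ j ∈ Finset.univ.erase i, |A i j|) := by
  have hoff : ∀ j ∈ Finset.univ.erase i, ‖(1 + δ • A) i j‖ = δ * |A i j| := fun j hj => by
    simp [one_apply_ne' (Finset.ne_of_mem_erase hj), abs_of_nonneg hδ]
  rw [← Finset.add_sum_erase _ _ (Finset.mem_univ i), Finset.sum_congr rfl hoff,
    ← Finset.mul_sum, add_apply, one_apply_eq, smul_apply, smul_eq_mul, Real.norm_eq_abs,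
    abs_of_nonneg hdiag, mul_add, add_assoc]

theorem linfty_opNorm_one_add_smul [Nonempty ι] (A : Matrix ι ι ℝ) {δ : ℝ} (hδ : 0 ≤ δ)
    (hdiag : ∀ i, 0 ≤ 1 + δ * A i i) :
    ‖1 + δ • A‖ = 1 + δ * ⨆ i, (A i i + ∑ j ∈ Finset.univ.erase i, |A i j|) := by
  rw [linfty_opNorm_eq_iSup, Real.mul_iSup_of_nonneg hδ,
    add_ciSup (Set.finite_range _).bddAbove]
  exact iSup_congr fun i => sum_norm_one_add_smul_row A hδ i (hdiag i)

end Matrix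

theorem logNorm_linfty_eq_max_row
    (n : ℕ) (hn : 1 ≤ n) (A : Matrix (Fin n) (Fin n) ℝ) :
    Filter.Tendsto
      (fun δ : ℝ => (‖(1 : Matrix (Fin n) (Fin n) ℝ) + δ • A‖ - 1) / δ)
      (nhdsWithin 0 (Set.Ioi 0))
      (nhds (⨆ i : Fin n, (A i i + ∑ j ∈ Finset.univ.erase i, |A i j|))) := by
  have : Nonempty (Fin n) := Fin.pos_iff_nonempty.mp hn
  have hdiag : ∀ᶠ δ in 𝓝 (0 : ℝ), ∀ i, 0 ≤ 1 + δ * A i i := eventually_all.2 fun i =>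
    ((continuous_const.add (continuous_id.mul continuous_const)).tendsto' 0 1 (by simp)).eventually
      (eventually_ge_nhds zero_lt_one)
  refine tendsto_const_nhds.congr' ?_
  filter_upwards [nhdsWithin_le_nhds hdiag, self_mem_nhdsWithin] with δ hδA (hδ : 0 < δ)
  rw [Matrix.linfty_opNorm_one_add_smul A hδ.le hδA, add_sub_cancel_left,
    mul_div_cancel_left₀ _ hδ.ne']
end

section
/- Let n ≥ 1 and let A = (a_ij) ∈ ℝ^{n×n}. With the induced 1-norm ‖M‖_1 = max_j Σ_i |m_ij| (the maximum absolute column sum, equivalently the ∞-operator norm of the transpose Mᵀ), the one-sided limit lim_{δ→0⁺} (‖I + δ·A‖_1 − 1)/δ exists and equals max_j [a_jj + Σ_{i≠j} |a_ij|]. That is, the logarithmic norm of A induced by the 1-norm is μ_1(A) = max_j [a_jj + Σ_{i,i≠j} |a_ij|]. -/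
/-! For small `δ > 0` every diagonal entry `1 + δ a_jj` of `I + δA` is positive, so the `j`-th
absolute column sum of `I + δA` is exactly `1 + δ (a_jj + Σ_{i≠j} |a_ij|)`. Hence
`‖I + δA‖₁ - 1 = δ · max_j (a_jj + Σ_{i≠j} |a_ij|)` for all small `δ > 0`: the difference
quotient is eventually constant. -/

open Matrix

attribute [local instance] Matrix.linftyOpNormedAddCommGroup

open Filter Topology Finset

namespace Matrix

theorem linfty_opNorm_transpose_eq_iSup {m n α : Type*} [Fintype m] [Fintype n]
    [NormedAddCommGroup α] (A : Matrix m n α) : ‖Aᵀ‖ = ⨆ j, ∑ i, ‖A i j‖ := by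
  rw [linfty_opNorm_def, Finset.sup_univ_eq_ciSup, NNReal.coe_iSup]
  simp [NNReal.coe_sum]

variable {ι : Type*} [Fintype ι] [DecidableEq ι]

theorem sum_norm_one_add_smul_apply {A : Matrix ι ι ℝ} {δ : ℝ} (hδ : 0 ≤ δ) {j : ι}
    (hj : 0 ≤ 1 + δ * A j j) :
    ∑ i, ‖(1 + δ • A) i j‖ = 1 + δ * (A j j + ∑ i ∈ univ.erase j, |A i j|) := by
  rw [← add_sum_erase _ _ (mem_univ j), mul_add, mul_sum, ← add_assoc]
  congr 1
  · simp [Real.norm_eq_abs, abs_of_nonneg hj]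
  · refine sum_congr rfl fun i hi => ?_
    simp [ne_of_mem_erase hi, abs_of_nonneg hδ]

theorem linfty_opNorm_transpose_one_add_smul [Nonempty ι] {A : Matrix ι ι ℝ} {δ : ℝ}
    (hδ : 0 ≤ δ) (hdiag : ∀ j, 0 ≤ 1 + δ * A j j) :
    ‖(1 + δ • A)ᵀ‖ = 1 + δ * ⨆ j, (A j j + ∑ i ∈ univ.erase j, |A i j|) := by
  have hmono : Monotone fun x : ℝ => 1 + δ * x := fun _ _ hxy => by dsimp only; gcongr
  rw [linfty_opNorm_transpose_eq_iSup, hmono.map_ciSup_of_continuousAt (by fun_prop)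
    (Set.finite_range _).bddAbove]
  exact iSup_congr fun j => sum_norm_one_add_smul_apply hδ (hdiag j)

end Matrix

theorem eventually_forall_one_add_mul_pos {ι : Type*} [Finite ι] (a : ι → ℝ) :
    ∀ᶠ δ in 𝓝 (0 : ℝ), ∀ j, 0 < 1 + δ * a j :=
  eventually_all.2 fun j =>
    ((continuous_const.add (continuous_id.mul continuous_const)).tendsto' (0 : ℝ) (1 : ℝ)
      (by simp)).eventually (lt_mem_nhds one_pos)

theorem logNorm_l1_eq_max_col
    (n : ℕ) (hn : 1 ≤ n) (A : Matrix (Fin n) (Fin n) ℝ) :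
    Filter.Tendsto
      (fun δ : ℝ => (‖((1 : Matrix (Fin n) (Fin n) ℝ) + δ • A)ᵀ‖ - 1) / δ)
      (nhdsWithin 0 (Set.Ioi 0))
      (nhds (⨆ j : Fin n, (A j j + ∑ i ∈ Finset.univ.erase j, |A i j|))) := by
  have : Nonempty (Fin n) := ⟨⟨0, hn⟩⟩
  refine tendsto_const_nhds.congr' ?_
  filter_upwards [self_mem_nhdsWithin,
    nhdsWithin_le_nhds (eventually_forall_one_add_mul_pos fun j => A j j)] with δ hδ hdiag
  rw [linfty_opNorm_transpose_one_add_smul hδ.out.le fun j => (hdiag j).le, add_sub_cancel_left, mul_div_cancel_left₀ _ hδ.out.ne']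
end

section
/- Let n ≥ 1, let K ≥ 1 be a natural number, and let c be a real number with 0 ≤ c ≤ 1/K. Let A_1, …, A_K ∈ ℝ^{n×n} be matrices such that each row of each A_k contains at most one nonzero entry and every entry of each A_k has absolute value at most c. Then μ_∞(−I) + Σ_{k=1}^{K} ‖A_k‖_∞ ≤ 0, where μ_∞(−I) = lim_{δ→0⁺} (‖I + δ·(−I)‖_∞ − 1)/δ = −1 is the logarithmic norm of −I induced by the ∞-operator norm ‖M‖_∞ = max_i Σ_j |m_ij|. (This is the sufficient condition for asymptotic stability of the linear multi-delay system dH/dt = −I·H(t) + Σ_{k=1}^K A_k·H(t_{τ_k}), establishing that the proposed delay differential equation is asymptotically stable when the balance constant satisfies c ≤ 1/K.) -/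
/-! For `0 ≤ δ ≤ 1` we have `I + δ • (-I) = (1 - δ) • I`, whose norm is `1 - δ`, so the difference
quotient defining `μ_∞(-I)` is constantly `-1` near `0⁺`. A row with at most one nonzero entry has
absolute row sum at most `c`, hence `‖A_k‖_∞ ≤ c` and `∑ ‖A_k‖_∞ ≤ K c ≤ 1`. -/

attribute [local instance] Matrix.linftyOpNormedAddCommGroup

open Filter Topology

theorem tendsto_norm_add_smul_neg_sub_one_div {E : Type*} [SeminormedAddCommGroup E]
    [NormedSpace ℝ E] {x : E} (hx : ‖x‖ = 1) :
    Tendsto (fun δ : ℝ => (‖x + δ • -x‖ - 1) / δ) (𝓝[>] 0) (𝓝 (-1)) := by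
  refine tendsto_const_nhds.congr' ?_
  filter_upwards [Ioo_mem_nhdsGT (zero_lt_one' ℝ)] with δ ⟨hδ0, hδ1⟩
  have hsmul : x + δ • -x = (1 - δ) • x := by module
  rw [hsmul, norm_smul, hx, mul_one, Real.norm_of_nonneg (by linarith)]
  field_simp
  ring

namespace Matrix

section

attribute [local instance] Matrix.linftyOpSeminormedAddCommGroup

variable {m n α : Type*} [Fintype m] [Fintype n] [SeminormedAddCommGroup α]

theorem linfty_opNorm_le_of_row_subsingleton {A : Matrix m n α} {c : ℝ} (hc : 0 ≤ c)
    (hrow : ∀ i, {j | A i j ≠ 0}.Subsingleton) (hent : ∀ i j, ‖A i j‖ ≤ c) : ‖A‖ ≤ c := by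
  classical
  rw [linfty_opNorm_def, ← NNReal.coe_mk c hc, NNReal.coe_le_coe]
  refine Finset.sup_le fun i _ => ?_
  set nonzero : Finset n := Finset.univ.filter fun j => A i j ≠ 0
  have hcard : nonzero.card ≤ 1 :=
    Finset.card_le_one.2 fun j hj j' hj' =>
      hrow i (by simpa [nonzero] using hj) (by simpa [nonzero] using hj')
  have hbound : ∀ j ∈ nonzero, ‖A i j‖₊ ≤ ⟨c, hc⟩ := fun j _ => NNReal.coe_le_coe.1 (hent i j)
  rw [← Finset.sum_filter_of_ne (p := fun j => A i j ≠ 0) (f := fun j => ‖A i j‖₊)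
    fun j _ h hA => h (by rw [hA, nnnorm_zero])]
  refine (Finset.sum_le_card_nsmul _ _ _ hbound).trans ?_
  exact (nsmul_le_nsmul_left zero_le hcard).trans_eq (one_nsmul _)

end

end Matrix

theorem stability_condition_of_balance_const_le_general
    (n K : ℕ) (hn : 1 ≤ n)
    (c : ℝ) (hc0 : 0 ≤ c) (hc : c ≤ 1 / K)
    (A : Fin K → Matrix (Fin n) (Fin n) ℝ)
    (hrow : ∀ (k : Fin K) (i : Fin n), ({j : Fin n | A k i j ≠ 0}).Subsingleton)
    (hent : ∀ (k : Fin K) (i j : Fin n), |A k i j| ≤ c) :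
    Filter.Tendsto
      (fun δ : ℝ =>
        (‖(1 : Matrix (Fin n) (Fin n) ℝ) + δ • (-(1 : Matrix (Fin n) (Fin n) ℝ))‖ - 1) / δ)
      (nhdsWithin 0 (Set.Ioi 0)) (nhds (-1)) ∧
    (-1 : ℝ) + ∑ k : Fin K, ‖A k‖ ≤ 0 := by
  have : Nonempty (Fin n) := ⟨⟨0, hn⟩⟩
  let _ : NormedSpace ℝ (Matrix (Fin n) (Fin n) ℝ) := Matrix.linftyOpNormedSpace
  have hone : ‖(1 : Matrix (Fin n) (Fin n) ℝ)‖ = 1 :=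
    (Matrix.linfty_opNorm_diagonal _).trans norm_one
  refine ⟨tendsto_norm_add_smul_neg_sub_one_div hone, ?_⟩
  calc (-1 : ℝ) + ∑ k, ‖A k‖ ≤ -1 + ∑ _k : Fin K, c := by
        gcongr with k
        exact Matrix.linfty_opNorm_le_of_row_subsingleton hc0 (hrow k) (hent k)
    _ = -1 + K * c := by simp
    _ ≤ -1 + K * (1 / K) := by gcongr
    _ ≤ 0 := by
      rw [← div_eq_mul_one_div]
      linarith [div_self_le_one (K : ℝ)]

theorem stability_condition_of_balance_const_le
    (n K : ℕ) (hn : 1 ≤ n) (hK : 1 ≤ K)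
    (c : ℝ) (hc0 : 0 ≤ c) (hc : c ≤ 1 / K)
    (A : Fin K → Matrix (Fin n) (Fin n) ℝ)
    (hrow : ∀ (k : Fin K) (i : Fin n), ({j : Fin n | A k i j ≠ 0}).Subsingleton)
    (hent : ∀ (k : Fin K) (i j : Fin n), |A k i j| ≤ c) :
    Filter.Tendsto
      (fun δ : ℝ =>
        (‖(1 : Matrix (Fin n) (Fin n) ℝ) + δ • (-(1 : Matrix (Fin n) (Fin n) ℝ))‖ - 1) / δ)
      (nhdsWithin 0 (Set.Ioi 0)) (nhds (-1)) ∧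
    (-1 : ℝ) + ∑ k : Fin K, ‖A k‖ ≤ 0 :=
  stability_condition_of_balance_const_le_general n K hn c hc0 hc A hrow hent
end

section
/- Let n ≥ 1 and K be natural numbers, let c be a real number, let N : Fin n → Finset (Fin n) assign neighbors to each node such that every node i has at most K out-neighbors (|N(i)| ≤ K) and every node j appears as a neighbor of at most K nodes (|{i : j ∈ N(i)}| ≤ K), and let α_ij and τ_ij be real edge weights and delay values. Then there exist matrices A_1, …, A_K ∈ ℝ^{n×n}, each having at most one nonzero entry in each row and at most one nonzero entry in each column, and delay vectors T_1, …, T_K : Fin n → ℝ, such that for every family of functions h_1, …, h_n : ℝ → ℝ, every node i, and every time t: c · Σ_{j ∈ N(i)} α_ij · h_j(t − τ_ij) = Σ_{k=1}^K Σ_{j=1}^n (A_k)_{ij} · h_j(t − T_k(j)). -/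
/-! Regrouping of the delayed graph convolution into linear multi-delay form: the update
g_i(t) = c·Σ_{j ∈ N(i)} α_ij·h_j(t − τ_ij) can be rewritten as Σ_{k=1}^K A_k·H(t_{τ_k}),
where each A_k has at most one nonzero entry per row and per column, and each delay
vector T_k assigns one delay value per coordinate. -/

open Finset

-- Lemma 1: transportation matrix with given marginals
lemma marginal_matrix (n : ℕ) :
    ∀ (M : ℕ) (r c : Fin n → ℕ), (∑ i, r i = M) → (∑ j, c j = M) →
    ∃ D : Fin n → Fin n → ℕ, (∀ i, ∑ j, D i j = r i) ∧ (∀ j, ∑ i, D i j = c j) := by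
  intro M
  induction M using Nat.strong_induction_on with
  | _ M ih =>
    intro r c hr hc
    rcases Nat.eq_zero_or_pos M with hM | hM
    · subst hM
      refine ⟨0, fun i => ?_, fun j => ?_⟩
      · simpa using (Finset.sum_eq_zero_iff.mp hr i (mem_univ i)).symm
      · simpa using (Finset.sum_eq_zero_iff.mp hc j (mem_univ j)).symm
    · have hr0 : ∃ i, r i ≠ 0 := by
        by_contra hcon; push_neg at hcon; simp [hcon] at hr; omega
      have hc0 : ∃ j, c j ≠ 0 := by
        by_contra hcon; push_neg at hcon; simp [hcon] at hc; omega
      obtain ⟨i0, hi0⟩ := hr0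
      obtain ⟨j0, hj0⟩ := hc0
      set r' : Fin n → ℕ := fun i => if i = i0 then r i0 - 1 else r i with hr'
      set c' : Fin n → ℕ := fun j => if j = j0 then c j0 - 1 else c j with hc'
      have hrdec : ∀ i, r i = r' i + (if i = i0 then 1 else 0) := by
        intro i; simp only [hr']; split <;> rename_i h
        · subst h; omega
        · omega
      have hcdec : ∀ j, c j = c' j + (if j = j0 then 1 else 0) := by
        intro j; simp only [hc']; split <;> rename_i h
        · subst h; omega
        · omega
      have hsr : ∑ i, r' i = M - 1 := by
        have : ∑ i, r i = (∑ i, r' i) + ∑ i, (if i = i0 then 1 else 0) := by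
          rw [← Finset.sum_add_distrib]; exact Finset.sum_congr rfl fun i _ => hrdec i
        simp [Finset.sum_ite_eq'] at this; omega
      have hsc : ∑ j, c' j = M - 1 := by
        have : ∑ j, c j = (∑ j, c' j) + ∑ j, (if j = j0 then 1 else 0) := by
          rw [← Finset.sum_add_distrib]; exact Finset.sum_congr rfl fun j _ => hcdec j
        simp [Finset.sum_ite_eq'] at this; omega
      obtain ⟨D', hD1, hD2⟩ := ih (M - 1) (by omega) r' c' hsr hsc
      refine ⟨fun i j => D' i j + (if i = i0 ∧ j = j0 then 1 else 0), fun i => ?_, fun j => ?_⟩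
      · rw [Finset.sum_add_distrib, hD1]
        have hs : ∑ j, (if i = i0 ∧ j = j0 then 1 else 0) = (if i = i0 then 1 else 0) := by
          by_cases h : i = i0 <;> simp [h, Finset.sum_ite_eq']
        rw [hs]; exact (hrdec i).symm
      · rw [Finset.sum_add_distrib, hD2]
        have hs : ∑ i, (if i = i0 ∧ j = j0 then 1 else 0) = (if j = j0 then 1 else 0) := by
          by_cases h : j = j0 <;> simp [h, Finset.sum_ite_eq']
        rw [hs]; exact (hcdec j).symm

-- Lemma 2: decompose doubly-stochastic-like nat matrix into permutations
lemma perm_decomp (n : ℕ) :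
    ∀ (m : ℕ) (w : Fin n → Fin n → ℕ), (∀ i, ∑ j, w i j = m) → (∀ j, ∑ i, w i j = m) →
    ∃ σ : Fin m → Equiv.Perm (Fin n),
      ∀ i j, w i j ≤ (Finset.univ.filter (fun k => σ k i = j)).card := by
  intro m
  induction m with
  | zero =>
    intro w hr _
    refine ⟨Fin.elim0, fun i j => ?_⟩
    have h1 : w i j ≤ ∑ j', w i j' := Finset.single_le_sum (fun _ _ => Nat.zero_le _) (mem_univ j)
    have h2 := hr i
    omega
  | succ m ih =>
    intro w hr hc
    -- Hall's condition
    have hall : ∀ s : Finset (Fin n),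
        s.card ≤ (s.biUnion (fun i => Finset.univ.filter (fun j => w i j ≠ 0))).card := by
      intro s
      set B := s.biUnion (fun i => Finset.univ.filter (fun j => w i j ≠ 0)) with hB
      have key : (m + 1) * s.card ≤ (m + 1) * B.card := by
        calc (m + 1) * s.card = ∑ i ∈ s, (m+1) := by rw [Finset.sum_const]; ring
        _ = ∑ i ∈ s, ∑ j, w i j := by
              exact Finset.sum_congr rfl fun i _ => (hr i).symm
        _ = ∑ i ∈ s, ∑ j ∈ B, w i j := by
              refine Finset.sum_congr rfl fun i hi => ?_
              refine (Finset.sum_subset (Finset.subset_univ B) ?_).symm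
              intro j _ hj
              by_contra hne
              exact hj (Finset.mem_biUnion.mpr ⟨i, hi, by simp [hne]⟩)
        _ = ∑ j ∈ B, ∑ i ∈ s, w i j := Finset.sum_comm
        _ ≤ ∑ j ∈ B, ∑ i, w i j := by
              refine Finset.sum_le_sum fun j _ => ?_
              exact Finset.sum_le_sum_of_subset (Finset.subset_univ s)
        _ = ∑ j ∈ B, (m+1) := Finset.sum_congr rfl fun j _ => hc j
        _ = (m + 1) * B.card := by rw [Finset.sum_const]; ring
      exact Nat.le_of_mul_le_mul_left key (by omega)
    obtain ⟨f, hfinj, hf⟩ :=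
      (Finset.all_card_le_biUnion_card_iff_exists_injective
        (fun i => Finset.univ.filter (fun j => w i j ≠ 0))).mp hall
    have hfbij : Function.Bijective f := Finite.injective_iff_bijective.mp hfinj
    let σ0 : Equiv.Perm (Fin n) := Equiv.ofBijective f hfbij
    have hfw : ∀ i, w i (f i) ≠ 0 := fun i => by simpa using hf i
    set w' : Fin n → Fin n → ℕ := fun i j => w i j - (if f i = j then 1 else 0) with hw'
    have hdec : ∀ i j, w i j = w' i j + (if f i = j then 1 else 0) := by
      intro i j; simp only [hw']; split <;> rename_i h
      · have := hfw i; rw [h] at this; omega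
      · omega
    have hr' : ∀ i, ∑ j, w' i j = m := by
      intro i
      have : ∑ j, w i j = (∑ j, w' i j) + ∑ j, (if f i = j then 1 else 0) := by
        rw [← Finset.sum_add_distrib]; exact Finset.sum_congr rfl fun j _ => hdec i j
      rw [hr i] at this
      simp [Finset.sum_ite_eq] at this; omega
    have hc' : ∀ j, ∑ i, w' i j = m := by
      intro j
      have h1 : ∑ i, w i j = (∑ i, w' i j) + ∑ i, (if f i = j then 1 else 0) := by
        rw [← Finset.sum_add_distrib]; exact Finset.sum_congr rfl fun i _ => hdec i j
      rw [hc j] at h1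
      have h2 : ∑ i, (if f i = j then 1 else 0) = 1 := by
        rw [← Finset.card_filter]
        have : Finset.univ.filter (fun i => f i = j) = {σ0.symm j} := by
          ext i
          simp only [Finset.mem_filter, Finset.mem_univ, true_and, Finset.mem_singleton]
          constructor
          · intro h; rw [← h]; exact (Equiv.symm_apply_apply σ0 i).symm
          · intro h; subst h; exact σ0.apply_symm_apply j
        simp [this]
      omega
    obtain ⟨σ', hσ'⟩ := ih w' hr' hc'
    refine ⟨Fin.cons σ0 σ', fun i j => ?_⟩
    have hcard : (Finset.univ.filter (fun k : Fin (m+1) => (Fin.cons σ0 σ' : Fin (m+1) → Equiv.Perm (Fin n)) k i = j)).card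
        = (if σ0 i = j then 1 else 0)
          + (Finset.univ.filter (fun k : Fin m => σ' k i = j)).card := by
      rw [Finset.card_filter, Finset.card_filter, Fin.sum_univ_succ]
      simp [Fin.cons_succ]
    rw [hcard]
    have := hσ' i j
    have hd := hdec i j
    have : σ0 i = f i := rfl
    rw [this]
    omega

theorem delayed_graph_conv_regroup
    (n K : ℕ) (hn : 1 ≤ n) (c : ℝ)
    (N : Fin n → Finset (Fin n))
    (hout : ∀ i : Fin n, (N i).card ≤ K)
    (hin : ∀ j : Fin n, (Finset.univ.filter (fun i : Fin n => j ∈ N i)).card ≤ K)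
    (α τ : Fin n → Fin n → ℝ) :
    ∃ (A : Fin K → Matrix (Fin n) (Fin n) ℝ) (T : Fin K → Fin n → ℝ),
      (∀ (k : Fin K) (i : Fin n), ({j : Fin n | A k i j ≠ 0}).Subsingleton) ∧
      (∀ (k : Fin K) (j : Fin n), ({i : Fin n | A k i j ≠ 0}).Subsingleton) ∧
      (∀ (h : Fin n → ℝ → ℝ) (i : Fin n) (t : ℝ),
        c * ∑ j ∈ N i, α i j * h j (t - τ i j) =
          ∑ k : Fin K, ∑ j : Fin n, A k i j * h j (t - T k j)) := by
  classical
  set deg : Fin n → ℕ := fun i => (N i).card with hdeg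
  set ind : Fin n → ℕ := fun j => (Finset.univ.filter (fun i : Fin n => j ∈ N i)).card with hind
  have hNcard : ∀ i, (N i).card = ∑ j, (if j ∈ N i then 1 else 0) := by
    intro i
    rw [← Finset.card_filter]
    congr 1
    ext j; simp
  have hdouble : ∑ i, deg i = ∑ j, ind j := by
    simp only [hdeg, hind]
    simp_rw [hNcard, Finset.card_filter]
    rw [Finset.sum_comm]
  obtain ⟨D, hD1, hD2⟩ := marginal_matrix n (K * n - ∑ i, deg i)
      (fun i => K - deg i) (fun j => K - ind j)
      (by
        show ∑ i, (K - deg i) = K * n - ∑ i, deg i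
        have h1 : ∑ i, ((K - deg i) + deg i) = K * n := by
          have : ∀ i : Fin n, (K - deg i) + deg i = K := fun i => Nat.sub_add_cancel (hout i)
          simp [this, Finset.sum_const, Finset.card_univ, Nat.mul_comm]
        rw [Finset.sum_add_distrib] at h1
        omega)
      (by
        show ∑ j, (K - ind j) = K * n - ∑ i, deg i
        have h1 : ∑ j, ((K - ind j) + ind j) = K * n := by
          have : ∀ j : Fin n, (K - ind j) + ind j = K := fun j => Nat.sub_add_cancel (hin j)
          simp [this, Finset.sum_const, Finset.card_univ, Nat.mul_comm]
        rw [Finset.sum_add_distrib] at h1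
        rw [hdouble]
        omega)
  set w : Fin n → Fin n → ℕ := fun i j => (if j ∈ N i then 1 else 0) + D i j with hw
  have hwr : ∀ i, ∑ j, w i j = K := by
    intro i
    simp only [hw]
    rw [Finset.sum_add_distrib, hD1, ← hNcard i]
    have h1 := hout i
    have h2 : deg i = (N i).card := rfl
    show (N i).card + (K - deg i) = K
    omega
  have hwc : ∀ j, ∑ i, w i j = K := by
    intro j
    simp only [hw]
    rw [Finset.sum_add_distrib, hD2, ← Finset.card_filter]
    have h1 := hin j
    have h2 : ind j = (Finset.univ.filter (fun i : Fin n => j ∈ N i)).card := rfl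
    show (Finset.univ.filter (fun i : Fin n => j ∈ N i)).card + (K - ind j) = K
    omega
  obtain ⟨σ, hσ⟩ := perm_decomp n K w hwr hwc
  -- every edge is covered by some permutation
  have hedge : ∀ i j, j ∈ N i → ∃ k : Fin K, σ k i = j := by
    intro i j hj
    have h1 : 1 ≤ w i j := by simp [hw, hj]
    have h2 := hσ i j
    have : (Finset.univ.filter (fun k => σ k i = j)).Nonempty := by
      rw [← Finset.card_pos]; omega
    obtain ⟨k, hk⟩ := this
    exact ⟨k, (Finset.mem_filter.mp hk).2⟩
  set pick : ∀ i j, j ∈ N i → Fin K := fun i j hj => (hedge i j hj).choose with hpick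
  have hpickspec : ∀ i j (hj : j ∈ N i), σ (pick i j hj) i = j := fun i j hj =>
    (hedge i j hj).choose_spec
  refine ⟨fun k i j => if hj : j ∈ N i then (if pick i j hj = k then c * α i j else 0) else 0,
    fun k j => τ ((σ k).symm j) j, ?_, ?_, ?_⟩
  · intro k i j hj j' hj'
    simp only [Set.mem_setOf_eq] at hj hj'
    have h1 : ∃ hm : j ∈ N i, pick i j hm = k := by
      by_contra hcon; push_neg at hcon
      apply hj; split <;> rename_i h
      · simp [hcon h]
      · rfl
    have h2 : ∃ hm : j' ∈ N i, pick i j' hm = k := by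
      by_contra hcon; push_neg at hcon
      apply hj'; split <;> rename_i h
      · simp [hcon h]
      · rfl
    obtain ⟨hm, hk⟩ := h1
    obtain ⟨hm', hk'⟩ := h2
    have e1 : σ k i = j := by rw [← hk]; exact hpickspec i j hm
    have e2 : σ k i = j' := by rw [← hk']; exact hpickspec i j' hm'
    rw [← e1, ← e2]
  · intro k j i hi i' hi'
    simp only [Set.mem_setOf_eq] at hi hi'
    have h1 : ∃ hm : j ∈ N i, pick i j hm = k := by
      by_contra hcon; push_neg at hcon
      apply hi; split <;> rename_i h
      · simp [hcon h]
      · rfl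
    have h2 : ∃ hm : j ∈ N i', pick i' j hm = k := by
      by_contra hcon; push_neg at hcon
      apply hi'; split <;> rename_i h
      · simp [hcon h]
      · rfl
    obtain ⟨hm, hk⟩ := h1
    obtain ⟨hm', hk'⟩ := h2
    have e1 : σ k i = j := by rw [← hk]; exact hpickspec i j hm
    have e2 : σ k i' = j := by rw [← hk']; exact hpickspec i' j hm'
    have : σ k i = σ k i' := by rw [e1, e2]
    exact (σ k).injective this
  · intro h i t
    rw [Finset.sum_comm]
    rw [Finset.mul_sum]
    rw [← Finset.sum_subset (Finset.subset_univ (N i))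
      (by
        intro j _ hj
        rw [Finset.sum_eq_zero]
        intro k _
        simp [hj])]
    refine Finset.sum_congr rfl fun j hj => ?_
    have hstep : ∀ k : Fin K,
        (if hj' : j ∈ N i then (if pick i j hj' = k then c * α i j else 0) else 0)
          * h j (t - τ ((σ k).symm j) j)
        = (if pick i j hj = k then c * (α i j * h j (t - τ i j)) else 0) := by
      intro k
      rw [dif_pos hj]
      by_cases hk : pick i j hj = k
      · have hs : σ k i = j := by rw [← hk]; exact hpickspec i j hj
        have hT : τ ((σ k).symm j) j = τ i j := by rw [← hs, Equiv.symm_apply_apply]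
        rw [if_pos hk, if_pos hk, hT]; ring
      · rw [if_neg hk, if_neg hk, zero_mul]
    have hsum : ∑ k : Fin K,
        (if hj' : j ∈ N i then (if pick i j hj' = k then c * α i j else 0) else 0)
          * h j (t - τ ((σ k).symm j) j)
        = ∑ k : Fin K, (if pick i j hj = k then c * (α i j * h j (t - τ i j)) else 0) :=
      Finset.sum_congr rfl fun k _ => hstep k
    rw [hsum, Finset.sum_ite_eq]
    simp
end
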